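/- For every integer d ≥ 2 there exist real a, b with 2(b² + (a-1)²) = 2√d; hence (given a (d,d,d,1)-RDS construction of d MUBs in ℂ^d and any π ∈ S_d) the d² concatenated vectors [L(π,a+ib) | L(π,2-a-ib)] in ℂ^{2d} form a set of d² equiangular lines, with all pairwise inner products of distinct vectors having magnitude 2√d. -/

import Mathlib

open Complex

/-- The vector of the `j`-th basis block indexed by `m`, with entry `π j`
multiplied by `v`. -/
def modVec {d : ℕ} (B : Fin d → Fin d → Fin d → ℂ) (π : Equiv.Perm (Fin d))
    (v : ℂ) (j m : Fin d) : Fin d → ℂ :=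
  fun ℓ => if ℓ = π j then v * B j m ℓ else B j m ℓ

/-- The concatenation in `ℂ^{2d}` of the vector of `L(π,v)` and the corresponding
vector of `L(π,v')`. -/
def concVec {d : ℕ} (B : Fin d → Fin d → Fin d → ℂ) (π : Equiv.Perm (Fin d))
    (v v' : ℂ) (j m : Fin d) : Fin d ⊕ Fin d → ℂ :=
  Sum.elim (modVec B π v j m) (modVec B π v' j m)

/-!
Write the two perturbation factors as `v = 1 + w` and `v' = 1 - w`. In each block the inner
product of two modified vectors differs from the unmodified one by terms linear in `w` (resp.
`conj w`) and a term `|w|² x(π j) conj (y(π j'))` present only when `π j = π j'`. The linear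
terms cancel between the two blocks, so the concatenated inner product is `2⟨x, y⟩`, plus
`2|w|² x(π j) conj (y(π j))` when `j = j'`. Vectors from different bases are then unbiased
(`π j ≠ π j'`), and distinct vectors of the same basis are orthogonal with unimodular entries,
so both cases give `2√d` once `|w|² = √d`, e.g. `w = d^{1/4}`.
-/

open ComplexConjugate

section
variable {d : ℕ} (B : Fin d → Fin d → Fin d → ℂ) (π : Equiv.Perm (Fin d))

theorem sum_modVec_mul_conj (v : ℂ) (j m j' m' : Fin d) :
    ∑ ℓ, modVec B π v j m ℓ * conj (modVec B π v j' m' ℓ) =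
      ∑ ℓ, B j m ℓ * conj (B j' m' ℓ)
        + (v - 1) * (B j m (π j) * conj (B j' m' (π j)))
        + conj (v - 1) * (B j m (π j') * conj (B j' m' (π j')))
        + if π j = π j' then normSq (v - 1) * (B j m (π j) * conj (B j' m' (π j))) else 0 := by
  have hpoint : ∀ ℓ, modVec B π v j m ℓ * conj (modVec B π v j' m' ℓ) =
      B j m ℓ * conj (B j' m' ℓ)
        + (if ℓ = π j then (v - 1) * (B j m ℓ * conj (B j' m' ℓ)) else 0)
        + (if ℓ = π j' then conj (v - 1) * (B j m ℓ * conj (B j' m' ℓ)) else 0)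
        + if ℓ = π j then
            (if ℓ = π j' then normSq (v - 1) * (B j m ℓ * conj (B j' m' ℓ)) else 0) else 0 := by
    intro ℓ
    rw [← mul_conj]
    simp only [modVec]
    split_ifs <;> (try simp only [map_mul, map_sub, map_one]) <;> ring
  simp only [hpoint, Finset.sum_add_distrib, Finset.sum_ite_eq', Finset.mem_univ, if_true]

theorem sum_concVec_mul_conj (w : ℂ) (j m j' m' : Fin d) :
    ∑ ℓ, concVec B π (1 + w) (1 - w) j m ℓ * conj (concVec B π (1 + w) (1 - w) j' m' ℓ) =
      2 * ∑ ℓ, B j m ℓ * conj (B j' m' ℓ)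
        + if π j = π j' then 2 * normSq w * (B j m (π j) * conj (B j' m' (π j))) else 0 := by
  simp only [concVec, Fintype.sum_sum_type, Sum.elim_inl, Sum.elim_inr, sum_modVec_mul_conj]
  have h1 : 1 + w - 1 = w := by ring
  have h2 : 1 - w - 1 = -w := by ring
  rw [h1, h2, normSq_neg]
  split_ifs <;> simp only [map_neg] <;> ring

end

theorem norm_sum_concVec_mul_conj {d : ℕ} {B : Fin d → Fin d → Fin d → ℂ}
    (hmod : ∀ j m ℓ, ‖B j m ℓ‖ = 1)
    (horth : ∀ j m m', m ≠ m' → ∑ ℓ, B j m ℓ * conj (B j m' ℓ) = 0)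
    (hub : ∀ j j', j ≠ j' → ∀ m m', ‖∑ ℓ, B j m ℓ * conj (B j' m' ℓ)‖ = Real.sqrt d)
    (π : Equiv.Perm (Fin d)) {w : ℂ} (hw : normSq w = Real.sqrt d)
    {j m j' m' : Fin d} (hne : (j, m) ≠ (j', m')) :
    ‖∑ ℓ, concVec B π (1 + w) (1 - w) j m ℓ * conj (concVec B π (1 + w) (1 - w) j' m' ℓ)‖ =
      2 * Real.sqrt d := by
  rw [sum_concVec_mul_conj]
  by_cases hj : j = j'
  · subst hj
    have hm : m ≠ m' := fun h => hne (h ▸ rfl)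
    rw [horth j m m' hm, if_pos rfl, mul_zero, zero_add, norm_mul, norm_mul, norm_mul, norm_conj,
      hmod, hmod, Complex.norm_two, norm_real, Real.norm_of_nonneg (normSq_nonneg w), hw]
    ring
  · rw [if_neg (π.injective.ne hj), add_zero, norm_mul, hub j j' hj, Complex.norm_two]

theorem stmt_15_general (d : ℕ) (B : Fin d → Fin d → Fin d → ℂ)
    (hmod : ∀ j m ℓ, ‖B j m ℓ‖ = 1)
    (horth : ∀ j m m', m ≠ m' →
      ∑ ℓ, B j m ℓ * (starRingEnd ℂ) (B j m' ℓ) = 0)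
    (hub : ∀ j j', j ≠ j' → ∀ m m',
      ‖∑ ℓ, B j m ℓ * (starRingEnd ℂ) (B j' m' ℓ)‖ = Real.sqrt d)
    (π : Equiv.Perm (Fin d)) :
    ∃ a b : ℝ, 2 * (b ^ 2 + (a - 1) ^ 2) = 2 * Real.sqrt d ∧
      ∀ j m j' m', (j, m) ≠ (j', m') →
        ‖∑ ℓ, concVec B π ((a : ℂ) + b * I) (2 - a - b * I) j m ℓ *
            (starRingEnd ℂ)
              (concVec B π ((a : ℂ) + b * I) (2 - a - b * I) j' m' ℓ)‖ =
          2 * Real.sqrt d := by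
  set t := Real.sqrt (Real.sqrt d)
  have ht : t ^ 2 = Real.sqrt d := Real.sq_sqrt (Real.sqrt_nonneg _)
  refine ⟨1 + t, 0, by rw [← ht]; ring, fun j m j' m' hne => ?_⟩
  have hv : ((1 + t : ℝ) : ℂ) + (0 : ℝ) * I = 1 + t := by push_cast; ring
  have hv' : 2 - ((1 + t : ℝ) : ℂ) - (0 : ℝ) * I = 1 - t := by push_cast; ring
  rw [hv, hv']
  exact norm_sum_concVec_mul_conj hmod horth hub π (by rw [normSq_ofReal, ← ht, sq]) hne

/-- For every `d ≥ 2` there exist reals `a, b` with `2(b² + (a-1)²) = 2√d`, and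
then (for `d` MUBs in `ℂ^d` built from a `(d,d,d,1)`-RDS and any `π ∈ S_d`) the
`d²` concatenated vectors `[L(π, a+ib) | L(π, 2-a-ib)]` in `ℂ^{2d}` form `d²`
equiangular lines: every inner product between distinct vectors has
magnitude `2√d`. -/
theorem stmt_15 (d : ℕ) (hd : 2 ≤ d) (B : Fin d → Fin d → Fin d → ℂ)
    (hmod : ∀ j m ℓ, ‖B j m ℓ‖ = 1)
    (horth : ∀ j m m', m ≠ m' →
      ∑ ℓ, B j m ℓ * (starRingEnd ℂ) (B j m' ℓ) = 0)
    (hub : ∀ j j', j ≠ j' → ∀ m m',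
      ‖∑ ℓ, B j m ℓ * (starRingEnd ℂ) (B j' m' ℓ)‖ = Real.sqrt d)
    (π : Equiv.Perm (Fin d)) :
    ∃ a b : ℝ, 2 * (b ^ 2 + (a - 1) ^ 2) = 2 * Real.sqrt d ∧
      ∀ j m j' m', (j, m) ≠ (j', m') →
        ‖∑ ℓ, concVec B π ((a : ℂ) + b * I) (2 - a - b * I) j m ℓ *
            (starRingEnd ℂ)
              (concVec B π ((a : ℂ) + b * I) (2 - a - b * I) j' m' ℓ)‖ =
          2 * Real.sqrt d :=
  stmt_15_general d B hmod horth hub π
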